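/- arXiv:2104.11966 — 4 statements merged into one kernel-verified Lean document; each statement's English description precedes it below -/
import Mathlib

section
/- Let A(ρ) > 0 be smooth on ρ > 0, and on ℝ⁴(t,x,u,ρ) consider the vector fields X₊ = A(ρ)∂_u + ∂_ρ and Y₊ = (u - ρA(ρ))⁻¹∂_t + ∂_x (defined where u ≠ ρA(ρ)). The distribution ⟨X₊, Y₊⟩ is integrable (i.e., [X₊,Y₊] lies in the span of X₊ and Y₊) if and only if the derivative of ρA(ρ) in the direction X₊, acting on the coefficient of Y₊, vanishes appropriately; in particular, if A(ρ) = ρ⁻¹√(p′(ρ)) then both distributions C₊ = ⟨X₊,Y₊⟩ and C₋ = ⟨X₋,Y₋⟩ (with X₋ = -A∂_u+∂_ρ, Y₋ = (u+ρA)⁻¹∂_t+∂_x) are integrable when p(ρ) = c₀ρ³ + c₁ for constants c₀ > 0, c₁. -/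
/-! In coordinates `[X₊, Y₊] = ρA′(ρ) / (u - ρA(ρ))² ∂_t`, and `∂_t` is independent of `X₊, Y₊`,
so `C₊` is integrable exactly where `ρA′(ρ) = 0`. For `p = c₀ρ³ + c₁` the speed `A = √(3c₀)` is
constant on `ρ > 0`, and `C₋` is `C₊` for the speed `-A`. -/

open Topology

noncomputable def pd (i : Fin 4) (f : (Fin 4 → ℝ) → ℝ) (z : Fin 4 → ℝ) : ℝ :=
  deriv (fun s => f (Function.update z i s)) (z i)

/-- Lie bracket of vector fields on ℝ⁴ in coordinates. -/
noncomputable def lieBracket (X Y : (Fin 4 → ℝ) → Fin 4 → ℝ) (z : Fin 4 → ℝ) :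
    Fin 4 → ℝ :=
  fun i => (∑ j, X z j * pd j (fun w => Y w i) z)
    - ∑ j, Y z j * pd j (fun w => X w i) z

noncomputable def Xplus (A : ℝ → ℝ) (z : Fin 4 → ℝ) : Fin 4 → ℝ := ![0, 0, A (z 3), 1]
noncomputable def Yplus (A : ℝ → ℝ) (z : Fin 4 → ℝ) : Fin 4 → ℝ :=
  ![(z 2 - z 3 * A (z 3))⁻¹, 1, 0, 0]
noncomputable def Xminus (A : ℝ → ℝ) (z : Fin 4 → ℝ) : Fin 4 → ℝ := ![0, 0, -A (z 3), 1]
noncomputable def Yminus (A : ℝ → ℝ) (z : Fin 4 → ℝ) : Fin 4 → ℝ :=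
  ![(z 2 + z 3 * A (z 3))⁻¹, 1, 0, 0]

lemma pd_eq_zero_of_update_eq {i : Fin 4} {f : (Fin 4 → ℝ) → ℝ} {z : Fin 4 → ℝ}
    (h : ∀ s, f (Function.update z i s) = f z) : pd i f z = 0 := by
  simp only [pd, h, deriv_const]

lemma pd_const (c : ℝ) (i : Fin 4) (z : Fin 4 → ℝ) : pd i (fun _ => c) z = 0 :=
  pd_eq_zero_of_update_eq fun _ => rfl

section Bracket

variable {A : ℝ → ℝ} {z : Fin 4 → ℝ}

lemma pd_Xplus_eq_zero {i j : Fin 4} (hj : j ≠ 3) : pd j (fun w => Xplus A w i) z = 0 :=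
  pd_eq_zero_of_update_eq fun s => by simp [Xplus, Function.update_of_ne hj.symm]

lemma pd_two_Yplus_zero (hd : z 2 - z 3 * A (z 3) ≠ 0) :
    pd 2 (fun w => Yplus A w 0) z = -1 / (z 2 - z 3 * A (z 3)) ^ 2 := by
  have h : HasDerivAt (fun s => (s - z 3 * A (z 3))⁻¹) (-1 / (z 2 - z 3 * A (z 3)) ^ 2) (z 2) :=
    (((hasDerivAt_id' (z 2)).sub_const (z 3 * A (z 3))).fun_inv hd).congr_deriv (by ring)
  simpa [pd, Yplus, Function.update_of_ne (show (3 : Fin 4) ≠ 2 by decide)] using h.deriv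

lemma pd_three_Yplus_zero {a : ℝ} (hA : HasDerivAt A a (z 3)) (hd : z 2 - z 3 * A (z 3) ≠ 0) :
    pd 3 (fun w => Yplus A w 0) z = (A (z 3) + z 3 * a) / (z 2 - z 3 * A (z 3)) ^ 2 := by
  have h : HasDerivAt (fun s => (z 2 - s * A s)⁻¹)
      ((A (z 3) + z 3 * a) / (z 2 - z 3 * A (z 3)) ^ 2) (z 3) :=
    ((((hasDerivAt_id' (z 3)).fun_mul hA).const_sub (z 2)).fun_inv hd).congr_deriv
      (by ring)
  simpa [pd, Yplus, Function.update_of_ne (show (2 : Fin 4) ≠ 3 by decide)] using h.deriv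

theorem lieBracket_Xplus_Yplus {a : ℝ} (hA : HasDerivAt A a (z 3))
    (hd : z 2 - z 3 * A (z 3) ≠ 0) :
    lieBracket (Xplus A) (Yplus A) z = ![z 3 * a / (z 2 - z 3 * A (z 3)) ^ 2, 0, 0, 0] := by
  funext i
  simp only [lieBracket, Fin.sum_univ_four, pd_Xplus_eq_zero (show (0 : Fin 4) ≠ 3 by decide),
    pd_Xplus_eq_zero (show (1 : Fin 4) ≠ 3 by decide)]
  fin_cases i <;> dsimp only [Fin.zero_eta, Fin.mk_one, Fin.reduceFinMk]
  · rw [pd_two_Yplus_zero hd, pd_three_Yplus_zero hA hd]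
    simp [Xplus, Yplus]
    ring
  all_goals simp [Xplus, Yplus, pd_const]

theorem exists_lieBracket_Xplus_Yplus_eq_iff {a : ℝ} (hA : HasDerivAt A a (z 3))
    (hd : z 2 - z 3 * A (z 3) ≠ 0) :
    (∃ b c : ℝ, lieBracket (Xplus A) (Yplus A) z = b • Xplus A z + c • Yplus A z) ↔
      z 3 * a = 0 := by
  rw [lieBracket_Xplus_Yplus hA hd]
  constructor
  · rintro ⟨b, c, h⟩
    have hb : 0 = b := by simpa [Xplus, Yplus] using congrFun h 3
    have hc : 0 = c := by simpa [Xplus, Yplus] using congrFun h 1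
    have h0 := congrFun h 0
    simp only [← hb, ← hc, zero_smul, add_zero] at h0
    simpa [hd] using h0
  · intro h
    refine ⟨0, 0, ?_⟩
    ext i
    fin_cases i <;> simp [h]

end Bracket

lemma Xminus_eq_Xplus_neg (A : ℝ → ℝ) : Xminus A = Xplus (-A) := rfl

lemma Yminus_eq_Yplus_neg (A : ℝ → ℝ) : Yminus A = Yplus (-A) := by
  funext z
  simp [Yminus, Yplus]

lemma inv_mul_sqrt_deriv_cubic {c0 c1 : ℝ} {p : ℝ → ℝ} (hp : ∀ r, p r = c0 * r ^ 3 + c1)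
    {r : ℝ} (hr : 0 < r) : r⁻¹ * √(deriv p r) = √(3 * c0) := by
  have hp' : HasDerivAt p (3 * c0 * r ^ 2) r := by
    rw [show p = fun x => c0 * x ^ 3 + c1 from funext hp]
    exact (((hasDerivAt_pow 3 r).const_mul c0).add_const c1).congr_deriv (by ring)
  rw [hp'.deriv, Real.sqrt_mul' _ (sq_nonneg r), Real.sqrt_sq hr.le]
  field_simp

theorem characteristic_distributions_integrable_for_cubic_pressure_general
    (c0 c1 : ℝ)
    (p : ℝ → ℝ) (hp : ∀ r, p r = c0 * r ^ 3 + c1)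
    (A : ℝ → ℝ) (hA : ∀ r, A r = r⁻¹ * Real.sqrt (deriv p r)) :
    ∀ z : Fin 4 → ℝ, 0 < z 3 →
      ((z 2 ≠ z 3 * A (z 3)) →
        ∃ a b : ℝ, lieBracket (Xplus A) (Yplus A) z
          = a • Xplus A z + b • Yplus A z) ∧
      ((z 2 ≠ -(z 3 * A (z 3))) →
        ∃ a b : ℝ, lieBracket (Xminus A) (Yminus A) z
          = a • Xminus A z + b • Yminus A z) := by
  intro z hz
  have hA_const : A =ᶠ[𝓝 (z 3)] fun _ => √(3 * c0) := by
    filter_upwards [eventually_gt_nhds hz] with r hr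
    rw [hA, inv_mul_sqrt_deriv_cubic hp hr]
  have hA' : HasDerivAt A 0 (z 3) := (hasDerivAt_const _ _).congr_of_eventuallyEq hA_const
  refine ⟨fun h => ?_, fun h => ?_⟩
  · exact (exists_lieBracket_Xplus_Yplus_eq_iff hA' (sub_ne_zero.2 h)).2 (mul_zero _)
  · rw [Xminus_eq_Xplus_neg, Yminus_eq_Yplus_neg]
    refine (exists_lieBracket_Xplus_Yplus_eq_iff hA'.neg ?_).2 (by simp)
    simpa [add_eq_zero_iff_eq_neg] using h

theorem characteristic_distributions_integrable_for_cubic_pressure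
    (c0 c1 : ℝ) (hc0 : 0 < c0)
    (p : ℝ → ℝ) (hp : ∀ r, p r = c0 * r ^ 3 + c1)
    (A : ℝ → ℝ) (hA : ∀ r, A r = r⁻¹ * Real.sqrt (deriv p r)) :
    ∀ z : Fin 4 → ℝ, 0 < z 3 →
      ((z 2 ≠ z 3 * A (z 3)) →
        ∃ a b : ℝ, lieBracket (Xplus A) (Yplus A) z
          = a • Xplus A z + b • Yplus A z) ∧
      ((z 2 ≠ -(z 3 * A (z 3))) →
        ∃ a b : ℝ, lieBracket (Xminus A) (Yminus A) z
          = a • Xminus A z + b • Yminus A z) :=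
  characteristic_distributions_integrable_for_cubic_pressure_general c0 c1 p hp A hA
end

section
/- Let A(ρ) be smooth and positive on ρ > 0, Q(ρ) an antiderivative of ρA²(ρ), and R(ρ) an antiderivative of Q(ρ). Define the surface N ⊂ ℝ⁴(t,x,u,ρ) parametrized by (u,ρ) via t = λu²/2 + α₀u + α₂/ρ + λR(ρ)/ρ + t₀ and x = λu³/3 - λuQ(ρ) + α₀u²/2 + λuR(ρ)/ρ + α₂u/ρ - α₀Q(ρ) + x₀, where λ, α₀, α₂, t₀, x₀ are constants. Then N is a multivalued solution of the Euler system: both 2-forms ω₁ = ρ dt∧du + u dt∧dρ - dx∧dρ and ω₂ = u dt∧du + (p′(ρ)/ρ) dt∧dρ - dx∧du restrict to zero on N, where p′(ρ) = ρ²A²(ρ). -/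
/-!
The pullbacks of `ω₁` and `ω₂` along `(u, ρ) ↦ (t, x, u, ρ)` are
`(u t_u - ρ t_ρ - x_u) du∧dρ` and `(-u t_ρ + ρA² t_u + x_ρ) du∧dρ`. With `Q' = ρA²` and `R' = Q`
the four partial derivatives of the surface are explicit, and both coefficients cancel identically:
the terms `α₂/ρ`, `λR/ρ`, `λQ` in `ω₁` and the terms `ρA²(λu + α₀)` in `ω₂` appear twice with
opposite signs.
-/

noncomputable def pd1 (f : ℝ → ℝ → ℝ) (a b : ℝ) : ℝ := deriv (fun x => f x b) a

noncomputable def pd2 (f : ℝ → ℝ → ℝ) (a b : ℝ) : ℝ := deriv (fun y => f a y) b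

noncomputable def surfaceT (R : ℝ → ℝ) (lam a0 a2 t0 : ℝ) (u r : ℝ) : ℝ :=
  lam * u ^ 2 / 2 + a0 * u + a2 / r + lam * R r / r + t0

noncomputable def surfaceX (Q R : ℝ → ℝ) (lam a0 a2 x0 : ℝ) (u r : ℝ) : ℝ :=
  lam * u ^ 3 / 3 - lam * u * Q r + a0 * u ^ 2 / 2 + lam * u * R r / r + a2 * u / r - a0 * Q r
    + x0

section
variable {Q R : ℝ → ℝ} {lam a0 a2 t0 x0 u r q : ℝ}

theorem pd1_surfaceT : pd1 (surfaceT R lam a0 a2 t0) u r = lam * u + a0 := by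
  have h : HasDerivAt (fun u => lam * u ^ 2 / 2 + a0 * u + (a2 / r + lam * R r / r + t0))
      (lam * (2 * u) / 2 + a0) u := by
    simpa using ((((hasDerivAt_pow 2 u).const_mul lam).div_const 2).add
      ((hasDerivAt_id u).const_mul a0)).add_const (a2 / r + lam * R r / r + t0)
  have hfun : (fun u => surfaceT R lam a0 a2 t0 u r) =
      fun u => lam * u ^ 2 / 2 + a0 * u + (a2 / r + lam * R r / r + t0) := by
    funext u; simp only [surfaceT]; ring
  rw [pd1, hfun, h.deriv]
  ring

theorem pd1_surfaceX :
    pd1 (surfaceX Q R lam a0 a2 x0) u r =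
      lam * u ^ 2 + a0 * u - lam * Q r + (lam * R r + a2) / r := by
  set c := lam * R r / r + a2 / r - lam * Q r
  have h : HasDerivAt (fun u => lam / 3 * u ^ 3 + a0 / 2 * u ^ 2 + c * u + (x0 - a0 * Q r))
      (lam / 3 * (3 * u ^ 2) + a0 / 2 * (2 * u) + c) u := by
    simpa using ((((hasDerivAt_pow 3 u).const_mul (lam / 3)).add
      ((hasDerivAt_pow 2 u).const_mul (a0 / 2))).add
      ((hasDerivAt_id u).const_mul c)).add_const (x0 - a0 * Q r)
  have hfun : (fun u => surfaceX Q R lam a0 a2 x0 u r) =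
      fun u => lam / 3 * u ^ 3 + a0 / 2 * u ^ 2 + c * u + (x0 - a0 * Q r) := by
    funext u; simp only [surfaceX, c]; ring
  rw [pd1, hfun, h.deriv]
  simp only [c]
  ring

theorem pd2_surfaceT (hR : HasDerivAt R (Q r) r) (hr : r ≠ 0) :
    pd2 (surfaceT R lam a0 a2 t0) u r = lam * Q r / r - (a2 + lam * R r) / r ^ 2 := by
  have h : HasDerivAt (fun r => lam * u ^ 2 / 2 + a0 * u + t0 + (a2 + lam * R r) * r⁻¹)
      (lam * Q r * r⁻¹ + (a2 + lam * R r) * -(r ^ 2)⁻¹) r :=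
    (((hR.const_mul lam).const_add a2).mul (hasDerivAt_inv hr)).const_add _
  have hfun : (fun r => surfaceT R lam a0 a2 t0 u r) =
      fun r => lam * u ^ 2 / 2 + a0 * u + t0 + (a2 + lam * R r) * r⁻¹ := by
    funext r; simp only [surfaceT]; ring
  rw [pd2, hfun, h.deriv]
  ring

theorem pd2_surfaceX (hQ : HasDerivAt Q q r) (hR : HasDerivAt R (Q r) r) (hr : r ≠ 0) :
    pd2 (surfaceX Q R lam a0 a2 x0) u r =
      -(lam * u + a0) * q + lam * u * Q r / r - (lam * R r + a2) * u / r ^ 2 := by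
  have h : HasDerivAt (fun r => lam * u ^ 3 / 3 + a0 * u ^ 2 / 2 + x0 + -(lam * u + a0) * Q r
        + (lam * u * R r + a2 * u) * r⁻¹)
      (-(lam * u + a0) * q + (lam * u * Q r * r⁻¹ + (lam * u * R r + a2 * u) * -(r ^ 2)⁻¹)) r :=
    ((hQ.const_mul _).const_add _).add
      (((hR.const_mul (lam * u)).add_const (a2 * u)).mul (hasDerivAt_inv hr))
  have hfun : (fun r => surfaceX Q R lam a0 a2 x0 u r) = fun r =>
      lam * u ^ 3 / 3 + a0 * u ^ 2 / 2 + x0 + -(lam * u + a0) * Q r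
        + (lam * u * R r + a2 * u) * r⁻¹ := by
    funext r; simp only [surfaceX]; ring
  rw [pd2, hfun, h.deriv]
  ring

theorem surface_pullback_omega₁_eq_zero (hR : HasDerivAt R (Q r) r) (hr : r ≠ 0) :
    u * pd1 (surfaceT R lam a0 a2 t0) u r - r * pd2 (surfaceT R lam a0 a2 t0) u r
      - pd1 (surfaceX Q R lam a0 a2 x0) u r = 0 := by
  rw [pd1_surfaceT, pd2_surfaceT hR hr, pd1_surfaceX]
  field_simp
  ring

theorem surface_pullback_omega₂_eq_zero (hQ : HasDerivAt Q q r) (hR : HasDerivAt R (Q r) r)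
    (hr : r ≠ 0) :
    -u * pd2 (surfaceT R lam a0 a2 t0) u r + q * pd1 (surfaceT R lam a0 a2 t0) u r
      + pd2 (surfaceX Q R lam a0 a2 x0) u r = 0 := by
  rw [pd1_surfaceT, pd2_surfaceT hR hr, pd2_surfaceX hQ hR hr]
  ring

end

theorem multivalued_solution_general_state_general
    (A Q R : ℝ → ℝ)
    (hQ : ∀ r : ℝ, 0 < r → HasDerivAt Q (r * (A r) ^ 2) r)
    (hR : ∀ r : ℝ, 0 < r → HasDerivAt R (Q r) r)
    (lam a0 a2 t0 x0 : ℝ)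
    (tf xf : ℝ → ℝ → ℝ)
    (htf : ∀ u r : ℝ, tf u r = lam * u ^ 2 / 2 + a0 * u + a2 / r + lam * R r / r + t0)
    (hxf : ∀ u r : ℝ, xf u r = lam * u ^ 3 / 3 - lam * u * Q r + a0 * u ^ 2 / 2
      + lam * u * R r / r + a2 * u / r - a0 * Q r + x0) :
    ∀ u r : ℝ, 0 < r →
      u * pd1 tf u r - r * pd2 tf u r - pd1 xf u r = 0 ∧
      -u * pd2 tf u r + r * (A r) ^ 2 * pd1 tf u r + pd2 xf u r = 0 := by
  obtain rfl : tf = surfaceT R lam a0 a2 t0 := funext₂ htf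
  obtain rfl : xf = surfaceX Q R lam a0 a2 x0 := funext₂ hxf
  intro u r hr
  exact ⟨surface_pullback_omega₁_eq_zero (hR r hr) hr.ne',
    surface_pullback_omega₂_eq_zero (hQ r hr) (hR r hr) hr.ne'⟩

theorem multivalued_solution_general_state
    (A Q R : ℝ → ℝ) (hA : ∀ r, 0 < r → 0 < A r)
    (hQ : ∀ r : ℝ, 0 < r → HasDerivAt Q (r * (A r) ^ 2) r)
    (hR : ∀ r : ℝ, 0 < r → HasDerivAt R (Q r) r)
    (lam a0 a2 t0 x0 : ℝ)
    (tf xf : ℝ → ℝ → ℝ)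
    (htf : ∀ u r : ℝ, tf u r = lam * u ^ 2 / 2 + a0 * u + a2 / r + lam * R r / r + t0)
    (hxf : ∀ u r : ℝ, xf u r = lam * u ^ 3 / 3 - lam * u * Q r + a0 * u ^ 2 / 2
      + lam * u * R r / r + a2 * u / r - a0 * Q r + x0) :
    ∀ u r : ℝ, 0 < r →
      u * pd1 tf u r - r * pd2 tf u r - pd1 xf u r = 0 ∧
      -u * pd2 tf u r + r * (A r) ^ 2 * pd1 tf u r + pd2 xf u r = 0 :=
  multivalued_solution_general_state_general A Q R hQ hR lam a0 a2 t0 x0 tf xf htf hxf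
end

section
/- The 1-form ϰ = dx - (λu² + α₀u - λQ(ρ) + λR(ρ)/ρ + α₂/ρ)du + (λuR(ρ)/ρ² - λuQ(ρ)/ρ + ρA²(ρ)(λu+α₀) + α₂u/ρ²)dρ on ℝ³(x,u,ρ) is closed, where Q′(ρ) = ρA²(ρ) and R′(ρ) = Q(ρ), and λ, α₀, α₂ are constants. -/
noncomputable def pd3 (i : Fin 3) (f : (Fin 3 → ℝ) → ℝ) (z : Fin 3 → ℝ) : ℝ :=
  deriv (fun s => f (Function.update z i s)) (z i)

/-- Coefficient vector of ϰ at the point z = (x,u,ρ). -/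
noncomputable def kappaCoef (A Q R : ℝ → ℝ) (lam a0 a2 : ℝ) (z : Fin 3 → ℝ) :
    Fin 3 → ℝ :=
  ![1,
    -(lam * (z 1) ^ 2 + a0 * z 1 - lam * Q (z 2) + lam * R (z 2) / z 2 + a2 / z 2),
    lam * z 1 * R (z 2) / (z 2) ^ 2 - lam * z 1 * Q (z 2) / z 2
      + z 2 * (A (z 2)) ^ 2 * (lam * z 1 + a0) + a2 * z 1 / (z 2) ^ 2]

/-! The form ϰ has constant `dx`-coefficient and does not depend on `x`, so closedness reduces to
the single identity `∂_u c_ρ = ∂_ρ c_u`; both sides are computed with `Q' = ρA²` and `R' = Q`. -/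

open Function

section PartialDerivative

variable {f : (Fin 3 → ℝ) → ℝ} {z : Fin 3 → ℝ} {i : Fin 3}

theorem pd3_eq_of_hasDerivAt {f' : ℝ} (h : HasDerivAt (fun s => f (update z i s)) f' (z i)) :
    pd3 i f z = f' :=
  h.deriv

theorem pd3_eq_zero_of_update_eq (h : ∀ s, f (update z i s) = f z) : pd3 i f z = 0 := by
  simp only [pd3, h, deriv_const]

theorem pd3_symm_of_offDiag {c : (Fin 3 → ℝ) → Fin 3 → ℝ}
    (h01 : pd3 0 (fun w => c w 1) z = pd3 1 (fun w => c w 0) z)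
    (h02 : pd3 0 (fun w => c w 2) z = pd3 2 (fun w => c w 0) z)
    (h12 : pd3 1 (fun w => c w 2) z = pd3 2 (fun w => c w 1) z) :
    ∀ i j, pd3 i (fun w => c w j) z = pd3 j (fun w => c w i) z := by
  intro i j
  fin_cases i <;> fin_cases j <;> first | rfl | assumption | exact Eq.symm ‹_›

end PartialDerivative

section Kappa

variable (A Q R : ℝ → ℝ) (lam a0 a2 : ℝ) (z : Fin 3 → ℝ)

noncomputable def kappaMixedPartial (ρ : ℝ) : ℝ :=
  lam * R ρ / ρ ^ 2 - lam * Q ρ / ρ + lam * ρ * A ρ ^ 2 + a2 / ρ ^ 2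

theorem kappaCoef_update_zero (s : ℝ) :
    kappaCoef A Q R lam a0 a2 (update z 0 s) = kappaCoef A Q R lam a0 a2 z := by
  funext k
  simp [kappaCoef, update_of_ne]

theorem kappaCoef_zero : kappaCoef A Q R lam a0 a2 z 0 = 1 := rfl

theorem hasDerivAt_kappaCoef_two_update_one :
    HasDerivAt (fun s => kappaCoef A Q R lam a0 a2 (update z 1 s) 2)
      (kappaMixedPartial A Q R lam a2 (z 2)) (z 1) := by
  simp only [kappaCoef, kappaMixedPartial, Matrix.cons_val_two, Matrix.tail_cons,
    Matrix.head_cons, update_self, update_of_ne (by decide : (2 : Fin 3) ≠ 1)]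
  set ρ := z 2
  have hu := (hasDerivAt_id' (z 1)).const_mul lam
  refine (((((hu.mul_const (R ρ)).div_const (ρ ^ 2)).sub ((hu.mul_const (Q ρ)).div_const ρ)).add
    ((hu.add_const a0).const_mul (ρ * A ρ ^ 2))).add
    (((hasDerivAt_id' (z 1)).const_mul a2).div_const (ρ ^ 2))).congr_deriv ?_
  ring

variable {A Q R} in
theorem hasDerivAt_kappaCoef_one_update_two (hz : 0 < z 2)
    (hQ : HasDerivAt Q (z 2 * A (z 2) ^ 2) (z 2)) (hR : HasDerivAt R (Q (z 2)) (z 2)) :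
    HasDerivAt (fun s => kappaCoef A Q R lam a0 a2 (update z 2 s) 1)
      (kappaMixedPartial A Q R lam a2 (z 2)) (z 2) := by
  simp only [kappaCoef, kappaMixedPartial, Matrix.cons_val_one, update_self,
    update_of_ne (by decide : (1 : Fin 3) ≠ 2)]
  have hρ := hasDerivAt_id' (z 2)
  refine ((((hasDerivAt_const (z 2) (lam * z 1 ^ 2 + a0 * z 1)).sub (hQ.const_mul lam)).add
    ((hR.const_mul lam).div hρ hz.ne')).add
    ((hasDerivAt_const (z 2) a2).div hρ hz.ne')).neg.congr_deriv ?_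
  field_simp
  ring

end Kappa

theorem varkappa_closed_general
    (A Q R : ℝ → ℝ)
    (hQ : ∀ r : ℝ, 0 < r → HasDerivAt Q (r * (A r) ^ 2) r)
    (hR : ∀ r : ℝ, 0 < r → HasDerivAt R (Q r) r)
    (lam a0 a2 : ℝ) :
    ∀ z : Fin 3 → ℝ, 0 < z 2 → ∀ i j : Fin 3,
      pd3 i (fun w => kappaCoef A Q R lam a0 a2 w j) z
        = pd3 j (fun w => kappaCoef A Q R lam a0 a2 w i) z := by
  intro z hz
  have hx_free (k : Fin 3) : pd3 0 (fun w => kappaCoef A Q R lam a0 a2 w k) z = 0 :=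
    pd3_eq_zero_of_update_eq fun s => by rw [kappaCoef_update_zero]
  have hdx_const (k : Fin 3) : pd3 k (fun w => kappaCoef A Q R lam a0 a2 w 0) z = 0 :=
    pd3_eq_zero_of_update_eq fun s => by rw [kappaCoef_zero, kappaCoef_zero]
  refine pd3_symm_of_offDiag (by rw [hx_free, hdx_const]) (by rw [hx_free, hdx_const]) ?_
  rw [pd3_eq_of_hasDerivAt (hasDerivAt_kappaCoef_two_update_one A Q R lam a0 a2 z),
    pd3_eq_of_hasDerivAt
      (hasDerivAt_kappaCoef_one_update_two lam a0 a2 z hz (hQ _ hz) (hR _ hz))]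

theorem varkappa_closed
    (A Q R : ℝ → ℝ) (hA : ∀ r, 0 < r → 0 < A r)
    (hQ : ∀ r : ℝ, 0 < r → HasDerivAt Q (r * (A r) ^ 2) r)
    (hR : ∀ r : ℝ, 0 < r → HasDerivAt R (Q r) r)
    (lam a0 a2 : ℝ) :
    ∀ z : Fin 3 → ℝ, 0 < z 2 → ∀ i j : Fin 3,
      pd3 i (fun w => kappaCoef A Q R lam a0 a2 w j) z
        = pd3 j (fun w => kappaCoef A Q R lam a0 a2 w i) z :=
  varkappa_closed_general A Q R hQ hR lam a0 a2
end

section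
/- For an ideal gas, the quadratic form κ|_L = -(Rn/2)·T⁻²dT² - Rρ⁻²dρ² is negative definite at every point with T > 0, ρ > 0; hence the homentropic Euler system for an ideal gas is hyperbolic along every thermodynamic process. -/
/-!
In the coordinates `(T, ρ)` on the ideal-gas Lagrangian manifold, `κ|_L` is diagonal with the
negative coefficients `-(Rn/2)/T²` and `-R/ρ²`, hence negative definite. Along an isentrope
`s = s₀` the ideal-gas law makes the pressure a power law `p(ρ) = R e^{2s₀/(Rn)} ρ^{2/n+1}` with
positive coefficient and positive exponent, so `p'(ρ) > 0` and `det P_ω = -4 p'(ρ) < 0`.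
-/

lemma mul_sq_add_mul_sq_pos {a b x y : ℝ} (ha : 0 < a) (hb : 0 < b) (hxy : ¬(x = 0 ∧ y = 0)) :
    0 < a * x ^ 2 + b * y ^ 2 := by
  by_cases hx : x = 0
  · have hy : y ≠ 0 := fun hy => hxy ⟨hx, hy⟩
    have : 0 < b * y ^ 2 := by positivity
    linarith [mul_nonneg ha.le (sq_nonneg x)]
  · have : 0 < a * x ^ 2 := by positivity
    linarith [mul_nonneg hb.le (sq_nonneg y)]

lemma deriv_const_mul_rpow_pos {C γ ρ : ℝ} (hC : 0 < C) (hγ : 0 < γ) (hρ : 0 < ρ) :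
    0 < deriv (fun r : ℝ => C * r ^ γ) ρ := by
  rw [((Real.hasDerivAt_rpow_const (Or.inl hρ.ne')).const_mul C).deriv]
  positivity

theorem ideal_gas_kappa_negative_definite_and_hyperbolic
    (R n : ℝ) (hR : 0 < R) (hn : 0 < n) :
    (∀ T ρ : ℝ, 0 < T → 0 < ρ → ∀ dT dρ : ℝ, ¬(dT = 0 ∧ dρ = 0) →
      -(R * n / 2) / T ^ 2 * dT ^ 2 - R / ρ ^ 2 * dρ ^ 2 < 0) ∧
    (∀ s0 : ℝ, ∀ ρ : ℝ, 0 < ρ →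
      0 < deriv (fun r : ℝ => R * Real.exp (2 * s0 / (R * n)) * r ^ (2 / n + 1)) ρ ∧
      -4 * deriv (fun r : ℝ => R * Real.exp (2 * s0 / (R * n)) * r ^ (2 / n + 1)) ρ
        < 0) := by
  refine ⟨fun T ρ hT hρ dT dρ hd => ?_, fun s0 ρ hρ => ?_⟩
  · have hpos := mul_sq_add_mul_sq_pos (a := R * n / 2 / T ^ 2) (b := R / ρ ^ 2)
      (by positivity) (by positivity) hd
    rw [neg_div, neg_mul]
    linarith
  · have hp' := deriv_const_mul_rpow_pos (C := R * Real.exp (2 * s0 / (R * n)))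
      (γ := 2 / n + 1) (by positivity) (by positivity) hρ
    exact ⟨hp', by linarith⟩
end
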